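/- Let g : ℝⁿ → ℝ be differentiable with L-Lipschitz gradient, h₁ : ℝⁿ → ℝ ∪ {+∞} a proper lower semicontinuous convex function, h₂ : ℝⁿ → ℝ a continuous convex function, f = g + h₁ − h₂. Let x, x⁺ ∈ ℝⁿ with h₁(x) and h₁(x⁺) finite, d = x⁺ − x, ξ ∈ ∂h₂(x), B a symmetric matrix with m‖u‖² ≤ uᵀBu for all u (m > 0), θ̄ ∈ (0,1], δ ∈ (0,1), and suppose r ∈ ℝⁿ satisfies r − (∇g(x) − ξ) − B d ∈ ∂h₁(x⁺) and ‖r‖_{B⁻¹} ≤ (1 − θ̄)‖d‖_B. Then the backtracking line-search condition f(x + ηd) ≤ f(x) + δη((∇g(x) − ξ)ᵀd + h₁(x⁺) − h₁(x)) holds for every η with 0 < η ≤ min{1, (2m/L)θ̄(1 − δ)}. -/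

import Mathlib

open Matrix Filter Topology RealInnerProductSpace

noncomputable section

/-- `n`-dimensional Euclidean space. -/
abbrev Euc (n : ℕ) := EuclideanSpace ℝ (Fin n)

/-- `v` is a subgradient of the extended-real-valued convex function `φ` at `x`. -/
def ESubgradAt {n : ℕ} (φ : Euc n → EReal) (v x : Euc n) : Prop :=
  ∀ y : Euc n, φ x + ((⟪v, y - x⟫ : ℝ) : EReal) ≤ φ y

/-- `v` is a subgradient of the real-valued convex function `φ` at `x`. -/
def RSubgradAt {n : ℕ} (φ : Euc n → ℝ) (v x : Euc n) : Prop :=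
  ∀ y : Euc n, φ x + ⟪v, y - x⟫ ≤ φ y

/-- Convexity of an extended-real-valued function. -/
def EConvexF {n : ℕ} (φ : Euc n → EReal) : Prop :=
  ∀ x y : Euc n, ∀ a b : ℝ, 0 ≤ a → 0 ≤ b → a + b = 1 →
    φ (a • x + b • y) ≤ (a : EReal) * φ x + (b : EReal) * φ y

/-- Properness of an extended-real-valued function: never `⊥` and finite somewhere. -/
def ProperF {n : ℕ} (φ : Euc n → EReal) : Prop :=
  (∀ x, φ x ≠ ⊥) ∧ (∃ x, φ x ≠ ⊤)

/-- The quadratic form `uᵀ B u`. -/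
def quadF {n : ℕ} (B : Matrix (Fin n) (Fin n) ℝ) (u : Euc n) : ℝ :=
  ⟪u, (Matrix.toEuclideanLin B) u⟫

/-- The scaled norm `‖u‖_B = √(uᵀ B u)`. -/
def MNorm {n : ℕ} (B : Matrix (Fin n) (Fin n) ℝ) (u : Euc n) : ℝ :=
  Real.sqrt (quadF B u)

/-- The objective `f = g + h₁ - h₂`. -/
def fObj {n : ℕ} (g : Euc n → ℝ) (h₁ : Euc n → EReal) (h₂ : Euc n → ℝ) (x : Euc n) : EReal :=
  (g x : EReal) + h₁ x - (h₂ x : EReal)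

/-! Testing the subgradient inequality for `h₁` at `x⁺` against `x`, and bounding `⟪r, d⟫` by
Cauchy–Schwarz for the dual pair of norms `‖·‖_{B⁻¹}`, `‖·‖_B`, shows that the predicted decrease
`Δ = ⟪∇g(x) - ξ, d⟫ + h₁(x⁺) - h₁(x)` is at most `-θ̄ ‖d‖²_B ≤ -θ̄ m ‖d‖²`. Along the segment from
`x` to `x⁺`, the descent lemma for `g`, the subgradient `ξ` of `h₂` and convexity of `h₁` give
`f(x + η d) ≤ f(x) + η Δ + (L/2) η² ‖d‖²`, and the step-size restriction makes the quadratic term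
at most `(1 - δ) η |Δ|`. -/

section Descent

variable {E : Type*} [NormedAddCommGroup E] [InnerProductSpace ℝ E] [CompleteSpace E]

theorem HasGradientAt.hasDerivAt_comp_add_smul {f : E → ℝ} {v x d : E} {t : ℝ}
    (hf : HasGradientAt f v (x + t • d)) :
    HasDerivAt (fun s : ℝ => f (x + s • d)) ⟪v, d⟫ t := by
  have hline : HasDerivAt (fun s : ℝ => x + s • d) d t := by
    simpa using ((hasDerivAt_id t).smul_const d).const_add x
  simpa [Function.comp_def] using hf.hasFDerivAt.comp_hasDerivAt t hline

theorem descent_lemma {f : E → ℝ} {f' : E → E} {L : ℝ}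
    (hf : ∀ y, HasGradientAt f (f' y) y) (hLip : ∀ u v, ‖f' u - f' v‖ ≤ L * ‖u - v‖) (x y : E) :
    f y ≤ f x + ⟪f' x, y - x⟫ + L / 2 * ‖y - x‖ ^ 2 := by
  set d := y - x
  set F : ℝ → ℝ := fun t => t * ⟪f' x, d⟫ + L / 2 * t ^ 2 * ‖d‖ ^ 2 - f (x + t • d)
  have hF : ∀ t, HasDerivAt F (⟪f' x, d⟫ + L * t * ‖d‖ ^ 2 - ⟪f' (x + t • d), d⟫) t := by
    intro t
    have hmodel := ((hasDerivAt_id t).mul_const ⟪f' x, d⟫).add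
      (((hasDerivAt_pow 2 t).const_mul (L / 2)).mul_const (‖d‖ ^ 2))
    exact (hmodel.sub (hf _).hasDerivAt_comp_add_smul).congr_deriv (by ring)
  have hmono : MonotoneOn F (Set.Icc 0 1) := by
    refine monotoneOn_of_hasDerivWithinAt_nonneg (convex_Icc 0 1)
      (fun t _ => (hF t).continuousAt.continuousWithinAt) (fun t _ => (hF t).hasDerivWithinAt) ?_
    intro t ht
    rw [interior_Icc] at ht
    have hgap : ⟪f' (x + t • d) - f' x, d⟫ ≤ L * t * ‖d‖ ^ 2 :=
      calc ⟪f' (x + t • d) - f' x, d⟫ ≤ ‖f' (x + t • d) - f' x‖ * ‖d‖ := real_inner_le_norm _ _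
        _ ≤ L * ‖(x + t • d) - x‖ * ‖d‖ := by gcongr; exact hLip _ _
        _ = L * t * ‖d‖ ^ 2 := by
          rw [add_sub_cancel_left, norm_smul, Real.norm_of_nonneg ht.1.le]; ring
    rw [inner_sub_left] at hgap
    linarith
  have h01 := hmono (Set.left_mem_Icc.2 zero_le_one) (Set.right_mem_Icc.2 zero_le_one) zero_le_one
  simp only [F, one_smul, zero_smul, add_zero, d, add_sub_cancel] at h01
  linarith

end Descent

section QuadraticForm

variable {n : ℕ} {B : Matrix (Fin n) (Fin n) ℝ}

theorem quadF_eq_dotProduct (B : Matrix (Fin n) (Fin n) ℝ) (u : Euc n) :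
    quadF B u = u.ofLp ⬝ᵥ B *ᵥ u.ofLp := by
  simp [quadF, PiLp.inner_apply, dotProduct, mulVec, mul_comm]

theorem Matrix.PosSemidef.quadF_nonneg (hB : B.PosSemidef) (u : Euc n) : 0 ≤ quadF B u := by
  simpa [quadF_eq_dotProduct] using hB.dotProduct_mulVec_nonneg u.ofLp

theorem Matrix.posDef_of_mul_norm_sq_le_quadF {m : ℝ} (hm : 0 < m) (hB : B.IsSymm)
    (hBlow : ∀ u : Euc n, m * ‖u‖ ^ 2 ≤ quadF B u) : B.PosDef := by
  refine Matrix.PosDef.of_dotProduct_mulVec_pos hB fun v hv => ?_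
  have hpos : 0 < m * ‖WithLp.toLp 2 v‖ ^ 2 := by
    have : WithLp.toLp 2 v ≠ 0 := by simpa using hv
    positivity
  simpa [quadF_eq_dotProduct] using hpos.trans_le (hBlow (WithLp.toLp 2 v))

theorem Matrix.toEuclideanLin_inv_apply_toEuclideanLin (hB : IsUnit B) (u : Euc n) :
    toEuclideanLin B⁻¹ (toEuclideanLin B u) = u := by
  rw [← LinearMap.comp_apply, ← toLpLin_mul_same,
    nonsing_inv_mul B ((isUnit_iff_isUnit_det B).1 hB)]
  simp

theorem Matrix.PosDef.quadF_inv_sub_smul (hB : B.PosDef) (r d : Euc n) (t : ℝ) :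
    quadF B⁻¹ (r - t • toEuclideanLin B d) =
      quadF B d * (t * t) + (-2 * ⟪r, d⟫) * t + quadF B⁻¹ r := by
  have hsymm := isSymmetric_toEuclideanLin_iff.mpr hB.inv.1
  have hcancel := toEuclideanLin_inv_apply_toEuclideanLin hB.isUnit d
  have hcross : ⟪toEuclideanLin B d, toEuclideanLin B⁻¹ r⟫ = ⟪r, d⟫ := by
    rw [← hsymm, hcancel, real_inner_comm]
  simp only [quadF, map_sub, map_smul, hcancel, inner_sub_left, inner_sub_right,
    real_inner_smul_left, real_inner_smul_right, hcross]
  rw [real_inner_comm (toEuclideanLin B d) d]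
  ring

theorem Matrix.PosDef.inner_le_MNorm_inv_mul_MNorm (hB : B.PosDef) (r d : Euc n) :
    ⟪r, d⟫ ≤ MNorm B⁻¹ r * MNorm B d := by
  have hdiscr := discrim_le_zero fun t =>
    (hB.quadF_inv_sub_smul r d t) ▸ hB.inv.posSemidef.quadF_nonneg (r - t • toEuclideanLin B d)
  have hsq : ⟪r, d⟫ ^ 2 ≤ quadF B⁻¹ r * quadF B d := by
    rw [discrim] at hdiscr; linarith
  rw [MNorm, MNorm, ← Real.sqrt_mul (hB.inv.posSemidef.quadF_nonneg r)]
  exact (le_abs_self _).trans (Real.abs_le_sqrt hsq)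

end QuadraticForm

section ExtendedValued

variable {n : ℕ} {φ : Euc n → EReal} {v x y : Euc n} {a b : ℝ}

theorem ESubgradAt.add_inner_le (hφ : ESubgradAt φ v x) (hx : φ x = a) (hy : φ y = b) :
    a + ⟪v, y - x⟫ ≤ b := by
  simpa [hx, hy, ← EReal.coe_add] using hφ y

theorem EConvexF.le_add_smul_sub (hφ : EConvexF φ) (hx : φ x = a) (hy : φ y = b) {t : ℝ}
    (ht₀ : 0 ≤ t) (ht₁ : t ≤ 1) : φ (x + t • (y - x)) ≤ ((1 - t) * a + t * b : ℝ) := by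
  have hseg : x + t • (y - x) = (1 - t) • x + t • y := by module
  have h := hφ x y (1 - t) t (by linarith) ht₀ (by ring)
  rwa [← hseg, hx, hy, ← EReal.coe_mul, ← EReal.coe_mul, ← EReal.coe_add] at h

theorem fObj_le_coe {g : Euc n → ℝ} {h₂ : Euc n → ℝ} {c : ℝ} (hx : φ x ≤ c) :
    fObj g φ h₂ x ≤ ((g x + c - h₂ x : ℝ) : EReal) := by
  rw [fObj, EReal.coe_sub, EReal.coe_add]
  exact EReal.sub_le_sub (add_le_add_right hx _) le_rfl

theorem fObj_eq_coe {g : Euc n → ℝ} {h₂ : Euc n → ℝ} (hx : φ x = a) :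
    fObj g φ h₂ x = ((g x + a - h₂ x : ℝ) : EReal) := by
  rw [fObj, hx]; norm_cast

end ExtendedValued

theorem predicted_decrease_le {n : ℕ} {h₁ : Euc n → EReal} {B : Matrix (Fin n) (Fin n) ℝ}
    {x xp q r : Euc n} {a b θ : ℝ} (hB : B.PosDef)
    (hr : ESubgradAt h₁ (r - q - toEuclideanLin B (xp - x)) xp) (ha : h₁ x = a) (hb : h₁ xp = b)
    (hres : MNorm B⁻¹ r ≤ (1 - θ) * MNorm B (xp - x)) :
    ⟪q, xp - x⟫ + b - a ≤ -(θ * quadF B (xp - x)) := by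
  set d := xp - x
  have hsub := hr.add_inner_le hb ha
  have hquad : ⟪toEuclideanLin B d, d⟫ = quadF B d := real_inner_comm _ _
  rw [show x - xp = -d by simp [d], inner_neg_right, inner_sub_left, inner_sub_left, hquad] at hsub
  have hrd : ⟪r, d⟫ ≤ (1 - θ) * quadF B d :=
    calc ⟪r, d⟫ ≤ MNorm B⁻¹ r * MNorm B d := hB.inner_le_MNorm_inv_mul_MNorm r d
      _ ≤ (1 - θ) * MNorm B d * MNorm B d := by gcongr; exact Real.sqrt_nonneg _
      _ = (1 - θ) * quadF B d := by
        rw [mul_assoc, MNorm, Real.mul_self_sqrt (hB.posSemidef.quadF_nonneg d)]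
  linarith

theorem mul_le_of_le_div_mul {η m L θ δ : ℝ} (hη : 0 < η) (hm : 0 < m) (hθ : 0 < θ) (hδ : δ < 1)
    (hηle : η ≤ 2 * m / L * θ * (1 - δ)) : η * L ≤ 2 * m * θ * (1 - δ) := by
  rcases le_or_gt L 0 with hL | hL
  · -- with `2 * m / 0 = 0`, the bound on `η` is nonpositive for every `L ≤ 0`
    have : 2 * m / L * θ * (1 - δ) ≤ 0 :=
      mul_nonpos_of_nonpos_of_nonneg
        (mul_nonpos_of_nonpos_of_nonneg (div_nonpos_of_nonneg_of_nonpos (by positivity) hL) hθ.le)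
        (by linarith)
    linarith
  · calc η * L ≤ 2 * m / L * θ * (1 - δ) * L := by gcongr
      _ = 2 * m * θ * (1 - δ) := by field_simp

theorem step_decrease_le {η δ θ m L s C : ℝ} (hη : 0 ≤ η) (hδ : δ ≤ 1) (hs : 0 ≤ s)
    (hC : C ≤ -(θ * (m * s))) (hηL : η * L ≤ 2 * m * θ * (1 - δ)) :
    η * C + L / 2 * η ^ 2 * s ≤ δ * η * C := by
  linarith [mul_le_mul_of_nonneg_left hC (mul_nonneg (sub_nonneg.2 hδ) hη),
    mul_le_mul_of_nonneg_right hηL (mul_nonneg hη hs)]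

theorem line_search_condition_holds_general
    {n : ℕ} (L m θbar δ : ℝ)
    (g : Euc n → ℝ) (g' : Euc n → Euc n)
    (h₁ : Euc n → EReal) (h₂ : Euc n → ℝ)
    (x xp ξ r d : Euc n) (B : Matrix (Fin n) (Fin n) ℝ)
    (hg : ∀ y : Euc n, HasGradientAt g (g' y) y)
    (hLip : ∀ u v : Euc n, ‖g' u - g' v‖ ≤ L * ‖u - v‖)
    (hprop : ProperF h₁) (hconv : EConvexF h₁)
    (hfin : h₁ x ≠ ⊤) (hfinp : h₁ xp ≠ ⊤)
    (hd : d = xp - x)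
    (hξ : RSubgradAt h₂ ξ x)
    (hBsymm : B.IsSymm)
    (hm : 0 < m)
    (hBlow : ∀ u : Euc n, m * ‖u‖ ^ 2 ≤ quadF B u)
    (hθbar0 : 0 < θbar)
    (hδ1 : δ < 1)
    (hr : ESubgradAt h₁ (r - (g' x - ξ) - (Matrix.toEuclideanLin B) d) xp)
    (hres : MNorm B⁻¹ r ≤ (1 - θbar) * MNorm B d) :
    ∀ η : ℝ, 0 < η → η ≤ min 1 (2 * m / L * θbar * (1 - δ)) →
      fObj g h₁ h₂ (x + η • d) ≤ fObj g h₁ h₂ x +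
        ((δ * η * (⟪g' x - ξ, d⟫ + (h₁ xp).toReal - (h₁ x).toReal) : ℝ) : EReal) := by
  intro η hη hηle
  obtain ⟨hη1, hηL⟩ := le_min_iff.1 hηle
  subst hd
  set a := (h₁ x).toReal
  set b := (h₁ xp).toReal
  have ha : h₁ x = a := (EReal.coe_toReal hfin (hprop.1 x)).symm
  have hb : h₁ xp = b := (EReal.coe_toReal hfinp (hprop.1 xp)).symm
  have hC : ⟪g' x - ξ, xp - x⟫ + b - a ≤ -(θbar * (m * ‖xp - x‖ ^ 2)) :=
    (predicted_decrease_le (posDef_of_mul_norm_sq_le_quadF hm hBsymm hBlow) hr ha hb hres).trans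
      (neg_le_neg (mul_le_mul_of_nonneg_left (hBlow _) hθbar0.le))
  have hstep := step_decrease_le hη.le hδ1.le (sq_nonneg _) hC
    (mul_le_of_le_div_mul hη hm hθbar0 hδ1 hηL)
  have hgη := descent_lemma hg hLip x (x + η • (xp - x))
  have hh₂η := hξ (x + η • (xp - x))
  rw [add_sub_cancel_left, real_inner_smul_right, norm_smul, mul_pow, Real.norm_eq_abs, sq_abs]
    at hgη
  rw [add_sub_cancel_left, real_inner_smul_right] at hh₂η
  rw [fObj_eq_coe ha, ← EReal.coe_add]
  refine (fObj_le_coe (hconv.le_add_smul_sub ha hb hη.le hη1)).trans (EReal.coe_le_coe_iff.2 ?_)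
  rw [inner_sub_left] at hstep ⊢
  linarith

/-- the backtracking line-search condition holds for every step size
`0 < η ≤ min{1, (2m/L)θ̄(1 - δ)}`. -/
theorem line_search_condition_holds
    {n : ℕ} (L m θbar δ : ℝ)
    (g : Euc n → ℝ) (g' : Euc n → Euc n)
    (h₁ : Euc n → EReal) (h₂ : Euc n → ℝ)
    (x xp ξ r d : Euc n) (B : Matrix (Fin n) (Fin n) ℝ)
    (hL : 0 ≤ L)
    (hg : ∀ y : Euc n, HasGradientAt g (g' y) y)
    (hLip : ∀ u v : Euc n, ‖g' u - g' v‖ ≤ L * ‖u - v‖)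
    (hprop : ProperF h₁) (hlsc : LowerSemicontinuous h₁) (hconv : EConvexF h₁)
    (hh₂cont : Continuous h₂) (hh₂conv : ConvexOn ℝ Set.univ h₂)
    (hfin : h₁ x ≠ ⊤) (hfinp : h₁ xp ≠ ⊤)
    (hd : d = xp - x)
    (hξ : RSubgradAt h₂ ξ x)
    (hBsymm : B.IsSymm)
    (hm : 0 < m)
    (hBlow : ∀ u : Euc n, m * ‖u‖ ^ 2 ≤ quadF B u)
    (hθbar0 : 0 < θbar) (hθbar1 : θbar ≤ 1)
    (hδ0 : 0 < δ) (hδ1 : δ < 1)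
    (hr : ESubgradAt h₁ (r - (g' x - ξ) - (Matrix.toEuclideanLin B) d) xp)
    (hres : MNorm B⁻¹ r ≤ (1 - θbar) * MNorm B d) :
    ∀ η : ℝ, 0 < η → η ≤ min 1 (2 * m / L * θbar * (1 - δ)) →
      fObj g h₁ h₂ (x + η • d) ≤ fObj g h₁ h₂ x +
        ((δ * η * (⟪g' x - ξ, d⟫ + (h₁ xp).toReal - (h₁ x).toReal) : ℝ) : EReal) :=
  line_search_condition_holds_general L m θbar δ g g' h₁ h₂ x xp ξ r d B hg hLip hprop hconv hfin
    hfinp hd hξ hBsymm hm hBlow hθbar0 hδ1 hr hres
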